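/- arXiv:math/0602440 — 3 statements merged into one kernel-verified Lean document; each statement's English description precedes it below -/
import Mathlib

section
/- For 0 < q < 1 and |x| < 1, the Euler formula holds: (x;q)_∞ = Σ_{n≥0} (-1)^n q^{n(n-1)/2} x^n / (q;q)_n, and in fact both sides are entire functions of x so the identity holds for all complex x. -/
/-!
Let `S(x) = Σ aₙ xⁿ` with `aₙ = (-1)ⁿ q^(n choose 2) / (q;q)ₙ`. Since
`|aₙ₊₁| ≤ |q|ⁿ |aₙ| / (1 - |q|)`, the series converges for every `x`. The recursion
`aₙ₊₁ (1 - qⁿ⁺¹) = -qⁿ aₙ` gives `S(x) = (1 - x) S(qx)`, hence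
`S(x) = (x;q)_N · S(qᴺ x)` for all `N`, and `S(qᴺ x) → S(0) = 1` by dominated convergence.
So the partial products of `(x;q)_∞` converge to `S(x)`.
-/

/-- Finite q-Pochhammer `(q;q)_n` as a complex number. -/
noncomputable def qqPochN (q : ℝ) (n : ℕ) : ℂ :=
  ∏ k ∈ Finset.range n, (1 - (q : ℂ) ^ (k + 1))

open Finset Filter Topology

namespace QEuler

noncomputable def qPoch (q : ℂ) (n : ℕ) : ℂ :=
  ∏ k ∈ range n, (1 - q ^ (k + 1))

noncomputable def coeff (q : ℂ) (n : ℕ) : ℂ :=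
  (-1) ^ n * q ^ n.choose 2 / qPoch q n

noncomputable def series (q x : ℂ) : ℂ :=
  ∑' n, coeff q n * x ^ n

variable {q : ℂ}

lemma one_sub_norm_le_norm_one_sub_pow_succ (hq : ‖q‖ < 1) (k : ℕ) :
    1 - ‖q‖ ≤ ‖1 - q ^ (k + 1)‖ :=
  calc 1 - ‖q‖ ≤ 1 - ‖q‖ ^ (k + 1) := by
        gcongr; exact pow_le_of_le_one (norm_nonneg q) hq.le k.succ_ne_zero
    _ = ‖(1 : ℂ)‖ - ‖q ^ (k + 1)‖ := by rw [norm_one, norm_pow]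
    _ ≤ ‖1 - q ^ (k + 1)‖ := norm_sub_norm_le _ _

lemma one_sub_pow_succ_ne_zero (hq : ‖q‖ < 1) (k : ℕ) : 1 - q ^ (k + 1) ≠ 0 :=
  norm_pos_iff.mp <| (sub_pos.mpr hq).trans_le (one_sub_norm_le_norm_one_sub_pow_succ hq k)

lemma qPoch_ne_zero (hq : ‖q‖ < 1) (n : ℕ) : qPoch q n ≠ 0 :=
  prod_ne_zero_iff.mpr fun k _ => one_sub_pow_succ_ne_zero hq k

@[simp]
lemma coeff_zero (q : ℂ) : coeff q 0 = 1 := by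
  simp [coeff, qPoch]

lemma coeff_succ_mul (hq : ‖q‖ < 1) (n : ℕ) :
    coeff q (n + 1) * (1 - q ^ (n + 1)) = -q ^ n * coeff q n := by
  have := qPoch_ne_zero hq n
  have := one_sub_pow_succ_ne_zero hq n
  rw [coeff, coeff, qPoch, prod_range_succ, ← qPoch, Nat.choose_succ_succ', Nat.choose_one_right,
    pow_succ, pow_add]
  field_simp

lemma norm_coeff_succ_le (hq : ‖q‖ < 1) (n : ℕ) :
    ‖coeff q (n + 1)‖ ≤ ‖q‖ ^ n / (1 - ‖q‖) * ‖coeff q n‖ := by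
  rw [div_mul_eq_mul_div, le_div_iff₀ (sub_pos.mpr hq)]
  calc ‖coeff q (n + 1)‖ * (1 - ‖q‖) ≤ ‖coeff q (n + 1)‖ * ‖1 - q ^ (n + 1)‖ := by
        gcongr; exact one_sub_norm_le_norm_one_sub_pow_succ hq n
    _ = ‖q‖ ^ n * ‖coeff q n‖ := by
        rw [← norm_mul, coeff_succ_mul hq, norm_mul, norm_neg, norm_pow]

lemma summable_norm_coeff_mul_pow (hq : ‖q‖ < 1) (x : ℂ) :
    Summable fun n => ‖coeff q n * x ^ n‖ := by
  refine summable_of_ratio_norm_eventually_le (r := 1 / 2) (by norm_num) ?_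
  have hlim : Tendsto (fun n => ‖q‖ ^ n / (1 - ‖q‖) * ‖x‖) atTop (𝓝 0) := by
    simpa using ((tendsto_pow_atTop_nhds_zero_of_lt_one (norm_nonneg q) hq).div_const
      (1 - ‖q‖)).mul_const ‖x‖
  filter_upwards [hlim.eventually_le_const one_half_pos] with n hn
  simp only [norm_norm, norm_mul, norm_pow, pow_succ]
  calc ‖coeff q (n + 1)‖ * (‖x‖ ^ n * ‖x‖)
      ≤ ‖q‖ ^ n / (1 - ‖q‖) * ‖coeff q n‖ * (‖x‖ ^ n * ‖x‖) := by
        gcongr; exact norm_coeff_succ_le hq n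
    _ = ‖q‖ ^ n / (1 - ‖q‖) * ‖x‖ * (‖coeff q n‖ * ‖x‖ ^ n) := by ring
    _ ≤ 1 / 2 * (‖coeff q n‖ * ‖x‖ ^ n) := by gcongr

lemma summable_coeff_mul_pow (hq : ‖q‖ < 1) (x : ℂ) : Summable fun n => coeff q n * x ^ n :=
  (summable_norm_coeff_mul_pow hq x).of_norm

lemma series_eq_one_sub_mul_series_mul (hq : ‖q‖ < 1) (x : ℂ) :
    series q x = (1 - x) * series q (q * x) := by
  have hdiff : Summable fun n => coeff q n * x ^ n - coeff q n * (q * x) ^ n :=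
    (summable_coeff_mul_pow hq x).sub (summable_coeff_mul_pow hq (q * x))
  have hshift (n : ℕ) : coeff q (n + 1) * x ^ (n + 1) - coeff q (n + 1) * (q * x) ^ (n + 1)
      = -x * (coeff q n * (q * x) ^ n) := by
    linear_combination x ^ (n + 1) * coeff_succ_mul hq n
  have : series q x - series q (q * x) = -x * series q (q * x) :=
    calc series q x - series q (q * x)
        = ∑' n, (coeff q n * x ^ n - coeff q n * (q * x) ^ n) :=
          ((summable_coeff_mul_pow hq x).tsum_sub (summable_coeff_mul_pow hq (q * x))).symm
      _ = ∑' n, -x * (coeff q n * (q * x) ^ n) := by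
          rw [hdiff.tsum_eq_zero_add]; simp only [hshift, pow_zero, sub_self, zero_add]
      _ = -x * series q (q * x) := tsum_mul_left
  linear_combination this

lemma series_eq_prod_mul_series (hq : ‖q‖ < 1) (x : ℂ) (N : ℕ) :
    series q x = (∏ k ∈ range N, (1 - x * q ^ k)) * series q (q ^ N * x) := by
  induction N with
  | zero => simp
  | succ N ih =>
    rw [ih, series_eq_one_sub_mul_series_mul hq, prod_range_succ, ← mul_assoc q, ← pow_succ']
    ring

lemma tendsto_series_nhds_zero (hq : ‖q‖ < 1) : Tendsto (series q) (𝓝 0) (𝓝 1) := by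
  have hbound : ∀ᶠ y in 𝓝 (0 : ℂ), ∀ n, ‖coeff q n * y ^ n‖ ≤ ‖coeff q n * 1 ^ n‖ := by
    filter_upwards [Metric.closedBall_mem_nhds (0 : ℂ) one_pos] with y hy n
    rw [mem_closedBall_zero_iff] at hy
    simp only [norm_mul, norm_pow, one_pow, norm_one]
    exact mul_le_mul_of_nonneg_left (pow_le_one₀ (norm_nonneg y) hy) (norm_nonneg _)
  have := tendsto_tsum_of_dominated_convergence (summable_norm_coeff_mul_pow hq 1)
    (fun n => ((continuous_pow n).const_mul (coeff q n)).tendsto 0) hbound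
  rwa [tsum_eq_single 0 fun n hn => by simp [hn], pow_zero, mul_one, coeff_zero] at this

lemma tendsto_prod_range_series (hq : ‖q‖ < 1) (x : ℂ) :
    Tendsto (fun N => ∏ k ∈ range N, (1 - x * q ^ k)) atTop (𝓝 (series q x)) := by
  have htail : Tendsto (fun N => series q (q ^ N * x)) atTop (𝓝 1) := by
    refine (tendsto_series_nhds_zero hq).comp ?_
    simpa using (tendsto_pow_atTop_nhds_zero_of_norm_lt_one hq).mul_const x
  have := (tendsto_const_nhds (x := series q x)).mul (htail.inv₀ one_ne_zero)
  rw [inv_one, mul_one] at this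
  refine this.congr' ?_
  filter_upwards [htail.eventually_ne one_ne_zero] with N hN
  rw [series_eq_prod_mul_series hq x N, mul_assoc, mul_inv_cancel₀ hN, mul_one]

lemma hasProd_one_sub_mul_pow (hq : ‖q‖ < 1) (x : ℂ) :
    HasProd (fun k => 1 - x * q ^ k) (series q x) := by
  have hmul : Multipliable fun k => 1 - x * q ^ k := by
    simpa [sub_eq_add_neg] using Complex.multipliable_one_add_of_summable
      ((summable_geometric_of_norm_lt_one hq).mul_left (-x))
  rw [← tendsto_nhds_unique hmul.tendsto_prod_tprod_nat (tendsto_prod_range_series hq x)]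
  exact hmul.hasProd

theorem hasSum_coeff_mul_pow (hq : ‖q‖ < 1) (x : ℂ) :
    HasSum (fun n => coeff q n * x ^ n) (∏' k, (1 - x * q ^ k)) := by
  rw [(hasProd_one_sub_mul_pow hq x).tprod_eq]
  exact (summable_coeff_mul_pow hq x).hasSum

end QEuler

/-- Euler's formula: `(x;q)_∞ = Σ_{n≥0} (-1)^n q^{n(n-1)/2} x^n / (q;q)_n`
for every complex `x` (both sides are entire in `x`). -/
theorem stmt5 (q : ℝ) (hq0 : 0 < q) (hq1 : q < 1) (x : ℂ) :
    HasSum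
      (fun n : ℕ => (-1 : ℂ) ^ n * (q : ℂ) ^ (n * (n - 1) / 2) / qqPochN q n * x ^ n)
      (∏' k : ℕ, (1 - x * (q : ℂ) ^ k)) := by
  have hq : ‖(q : ℂ)‖ < 1 := by
    rw [Complex.norm_real, Real.norm_eq_abs, abs_of_pos hq0]
    exact hq1
  simpa only [QEuler.coeff, QEuler.qPoch, qqPochN, Nat.choose_two_right, mul_div_assoc] using
    QEuler.hasSum_coeff_mul_pow hq x
end

section
/- For 0 < q < 1, the sequence of functions x ↦ (q^{1-n} x^2; q)_∞, n = 0, 1, 2, ..., i.e., {(q λ_n^2 x^2; q)_∞} with λ_n = q^{-n/2} the positive zeros of (x^2;q)_∞, is complete in L^1 with respect to the Jackson q-measure on (0,1): if y is q-integrable on (0,1) and ∫_0^1 y(x)(q^{1-n} x^2;q)_∞ d_q x = 0 for all n ≥ 0, then y(q^m) = 0 for all m ≥ 0. -/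
/-- Infinite q-Pochhammer `(a;q)_∞` as a real number. -/
noncomputable def qPochInf (a q : ℝ) : ℝ := ∏' k : ℕ, (1 - a * q ^ k)

/-- Jackson q-integral on `(0,1)`. -/
noncomputable def qIntegral01 (q : ℝ) (f : ℝ → ℝ) : ℝ :=
  (1 - q) * ∑' n : ℕ, f (q ^ n) * q ^ n

/-!
Put `B i = (q^(i+1);q)_∞` for `i : ℤ`: it vanishes for `i < 0` (one factor is `1 - 1`) and equals
`(q;q)_∞ / (q;q)_i` for `i ≥ 0`. With `c m = y (q^m) q^m`, the hypotheses say
`∑ₘ c m * B (2m - n) = 0` for every `n`.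

Euler's expansions `(z;q)_∞ = ∑ (-1)^k q^(k choose 2) z^k / (q;q)_k` and
`1/(z;q)_∞ = ∑ z^k / (q;q)_k` multiply to `1`; formally, their product is a power series
invariant under `z ↦ q z`, hence constant. Comparing coefficients,
`h k = (-1)^k q^(k choose 2) / ((q;q)_k (q;q)_∞)` is a left inverse of the kernel `B`:
`∑ₖ h k * B (i - k) = δ_{i,0}`. Summing the hypotheses for `n = 2 m₀ + k` against `h k` and
exchanging the absolutely convergent double sum leaves `c m₀ = 0`.
-/

open Finset PowerSeries

def qPoch {R : Type*} [CommRing R] (a q : R) (n : ℕ) : R := ∏ k ∈ range n, (1 - a * q ^ k)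

section CommRing

variable {R : Type*} [CommRing R]

lemma qPoch_succ (a q : R) (n : ℕ) : qPoch a q (n + 1) = qPoch a q n * (1 - a * q ^ n) :=
  prod_range_succ _ _

lemma coeff_zero_one_sub_X_mul (φ : R⟦X⟧) : coeff 0 ((1 - X) * φ) = coeff 0 φ := by
  rw [sub_mul, one_mul, map_sub, coeff_zero_X_mul, sub_zero]

lemma coeff_succ_one_sub_X_mul (φ : R⟦X⟧) (n : ℕ) :
    coeff (n + 1) ((1 - X) * φ) = coeff (n + 1) φ - coeff n φ := by
  rw [sub_mul, one_mul, map_sub, coeff_succ_X_mul]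

end CommRing

section Euler

variable {K : Type*} [Field K] {q : K}

lemma qPoch_self_ne_zero (hq : ∀ n, q ^ (n + 1) ≠ 1) (n : ℕ) : qPoch q q n ≠ 0 :=
  prod_ne_zero_iff.mpr fun k _ => by rw [← pow_succ']; exact sub_ne_zero.mpr (hq k).symm

def eulerCoeff (q : K) (k : ℕ) : K := (-1) ^ k * q ^ k.choose 2 / qPoch q q k

def eulerSeries (q : K) : K⟦X⟧ := mk (eulerCoeff q)

def invEulerSeries (q : K) : K⟦X⟧ := mk fun k => (qPoch q q k)⁻¹

lemma eulerSeries_eq_one_sub_X_mul_rescale (hq : ∀ n, q ^ (n + 1) ≠ 1) :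
    eulerSeries q = (1 - X) * rescale q (eulerSeries q) := by
  ext (_ | n)
  · simp [coeff_zero_one_sub_X_mul, coeff_rescale, eulerSeries]
  · rw [coeff_succ_one_sub_X_mul]
    simp only [eulerSeries, coeff_rescale, coeff_mk, eulerCoeff, qPoch_succ,
      Nat.choose_succ_succ', Nat.choose_one_right, ← pow_succ']
    field_simp [qPoch_self_ne_zero hq n, sub_ne_zero.mpr (hq n).symm]
    ring

lemma rescale_invEulerSeries (hq : ∀ n, q ^ (n + 1) ≠ 1) :
    rescale q (invEulerSeries q) = (1 - X) * invEulerSeries q := by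
  ext (_ | n)
  · simp [coeff_zero_one_sub_X_mul, coeff_rescale]
  · rw [coeff_succ_one_sub_X_mul]
    simp only [invEulerSeries, coeff_rescale, coeff_mk, qPoch_succ, ← pow_succ']
    field_simp [qPoch_self_ne_zero hq n, sub_ne_zero.mpr (hq n).symm]
    ring

lemma eq_C_of_rescale_eq (hq : ∀ n, q ^ (n + 1) ≠ 1) {φ : K⟦X⟧} (h : rescale q φ = φ) :
    φ = C (constantCoeff φ) := by
  ext (_ | n)
  · simp
  · have hn := congrArg (coeff (n + 1)) h
    rw [coeff_rescale] at hn
    rw [coeff_C, if_neg n.succ_ne_zero]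
    exact (mul_left_eq_self₀.mp hn).resolve_left (hq n)

lemma eulerSeries_mul_invEulerSeries (hq : ∀ n, q ^ (n + 1) ≠ 1) :
    eulerSeries q * invEulerSeries q = 1 := by
  have h : rescale q (eulerSeries q * invEulerSeries q) = eulerSeries q * invEulerSeries q := by
    rw [map_mul, rescale_invEulerSeries hq]
    conv_rhs => rw [eulerSeries_eq_one_sub_X_mul_rescale hq]
    ring
  rw [eq_C_of_rescale_eq hq h]
  simp [eulerSeries, invEulerSeries, eulerCoeff, qPoch]

lemma sum_range_eulerCoeff_mul_inv_qPoch (hq : ∀ n, q ^ (n + 1) ≠ 1) (p : ℕ) :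
    ∑ k ∈ range (p + 1), eulerCoeff q k * (qPoch q q (p - k))⁻¹ = if p = 0 then 1 else 0 := by
  have h := congrArg (coeff p) (eulerSeries_mul_invEulerSeries hq)
  rw [coeff_mul, Nat.sum_antidiagonal_eq_sum_range_succ_mk, coeff_one] at h
  simpa [eulerSeries, invEulerSeries] using h

end Euler

section qPochInf

variable {q : ℝ}

lemma multipliable_one_sub_mul_pow (hq : |q| < 1) (a : ℝ) :
    Multipliable fun k : ℕ => 1 - a * q ^ k := by
  simpa only [sub_eq_add_neg] using
    Real.multipliable_one_add_of_summable ((summable_geometric_of_abs_lt_one hq).mul_left a).neg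

lemma qPoch_mul_qPochInf (hq : |q| < 1) (a : ℝ) (n : ℕ) :
    qPoch a q n * qPochInf (a * q ^ n) q = qPochInf a q := by
  have h : Multipliable fun k => 1 - a * q ^ (k + n) :=
    (multipliable_one_sub_mul_pow hq (a * q ^ n)).congr fun k => by ring
  have e : qPochInf (a * q ^ n) q = ∏' k, (1 - a * q ^ (k + n)) :=
    tprod_congr fun k => by ring
  exact e ▸ Multipliable.prod_mul_tprod_nat_mul' (f := fun k => 1 - a * q ^ k) h

lemma qPochInf_pos {a : ℝ} (ha : a < 1) (hq0 : 0 ≤ q) (hq1 : q < 1) : 0 < qPochInf a q := by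
  have hfac (k : ℕ) : 0 < 1 - a * q ^ k := by
    have := pow_le_one₀ hq0 hq1.le (n := k)
    rcases le_total a 0 with h | h <;> nlinarith [pow_nonneg hq0 k]
  have hlog : Summable fun k : ℕ => Real.log (1 - a * q ^ k) := by
    simpa only [sub_eq_add_neg] using Real.summable_log_one_add_of_summable
      ((summable_geometric_of_lt_one hq0 hq1).mul_left a).neg
  rw [qPochInf, ← Real.rexp_tsum_eq_tprod hfac hlog]
  exact Real.exp_pos _

lemma qPochInf_le_one {a : ℝ} (ha0 : 0 ≤ a) (hq0 : 0 ≤ q) (hq1 : q < 1) (ha1 : a ≤ 1) :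
    qPochInf a q ≤ 1 := by
  have hq : |q| < 1 := by rwa [abs_of_nonneg hq0]
  refine le_of_tendsto' (multipliable_one_sub_mul_pow hq a).hasProd fun s => ?_
  refine prod_le_one (fun k _ => ?_) (fun k _ => ?_)
  · nlinarith [pow_le_one₀ hq0 hq1.le (n := k), pow_nonneg hq0 k]
  · nlinarith [pow_nonneg hq0 k]

lemma qPochInf_zpow_of_nonpos (hq : q ≠ 0) {i : ℤ} (hi : i ≤ 0) : qPochInf (q ^ i) q = 0 := by
  refine tprod_of_exists_eq_zero ⟨(-i).toNat, ?_⟩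
  rw [← zpow_natCast, ← zpow_add₀ hq, Int.toNat_of_nonneg (by omega), add_neg_cancel, zpow_zero,
    sub_self]

lemma abs_qPochInf_zpow_le_one (hq0 : 0 < q) (hq1 : q < 1) (i : ℤ) :
    |qPochInf (q ^ i) q| ≤ 1 := by
  rcases le_or_gt i 0 with hi | hi
  · simp [qPochInf_zpow_of_nonpos hq0.ne' hi]
  · have hqi : q ^ i < 1 := zpow_lt_one₀ hq0 hq1 hi
    rw [abs_of_pos (qPochInf_pos hqi hq0.le hq1)]
    exact qPochInf_le_one (zpow_nonneg hq0.le i) hq0.le hq1 hqi.le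

lemma qPoch_self_pos (hq0 : 0 ≤ q) (hq1 : q < 1) (n : ℕ) : 0 < qPoch q q n :=
  prod_pos fun k _ => sub_pos.mpr (by rw [← pow_succ']; exact pow_lt_one₀ hq0 hq1 k.succ_ne_zero)

lemma qPochInf_self_le_qPoch (hq0 : 0 ≤ q) (hq1 : q < 1) (n : ℕ) :
    qPochInf q q ≤ qPoch q q n := by
  rw [← qPoch_mul_qPochInf (by rwa [abs_of_nonneg hq0]) q n, ← pow_succ']
  exact mul_le_of_le_one_right (qPoch_self_pos hq0 hq1 n).le
    (qPochInf_le_one (pow_nonneg hq0 _) hq0 hq1 (pow_le_one₀ hq0 hq1.le))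

lemma qPochInf_zpow_natCast_add_one (hq0 : 0 < q) (hq1 : q < 1) (j : ℕ) :
    qPochInf (q ^ ((j : ℤ) + 1)) q = qPochInf q q / qPoch q q j := by
  rw [← qPoch_mul_qPochInf (by rwa [abs_of_pos hq0]) q j, zpow_add_one₀ hq0.ne', zpow_natCast,
    mul_comm (q ^ j), mul_div_cancel_left₀ _ (qPoch_self_pos hq0.le hq1 j).ne']

lemma abs_eulerCoeff_le (hq0 : 0 < q) (hq1 : q < 1) (k : ℕ) :
    |eulerCoeff q k| ≤ q ^ k / (q * qPochInf q q) := by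
  have hP := qPochInf_pos hq1 hq0.le hq1
  have hk : k ≤ k.choose 2 + 1 := by
    cases k with
    | zero => simp
    | succ k => rw [Nat.choose_succ_succ', Nat.choose_one_right]; omega
  rw [eulerCoeff, abs_div, abs_mul, abs_pow, abs_neg, abs_one, one_pow, one_mul, abs_pow,
    abs_of_pos hq0, abs_of_pos (qPoch_self_pos hq0.le hq1 k)]
  calc q ^ k.choose 2 / qPoch q q k ≤ q ^ k.choose 2 / qPochInf q q :=
        div_le_div_of_nonneg_left (by positivity) hP (qPochInf_self_le_qPoch hq0.le hq1 k)
    _ = q ^ (k.choose 2 + 1) / (q * qPochInf q q) := by field_simp; ring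
    _ ≤ q ^ k / (q * qPochInf q q) :=
        div_le_div_of_nonneg_right (pow_le_pow_of_le_one hq0.le hq1.le hk) (by positivity)

lemma summable_abs_eulerCoeff (hq0 : 0 < q) (hq1 : q < 1) :
    Summable fun k => |eulerCoeff q k| :=
  ((summable_geometric_of_lt_one hq0.le hq1).div_const _).of_nonneg_of_le
    (fun _ => abs_nonneg _) (abs_eulerCoeff_le hq0 hq1)

lemma tsum_eulerCoeff_mul_qPochInf_zpow (hq0 : 0 < q) (hq1 : q < 1) (i : ℤ) :
    ∑' k : ℕ, eulerCoeff q k / qPochInf q q * qPochInf (q ^ (i - k + 1)) q =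
      if i = 0 then 1 else 0 := by
  rcases lt_or_ge i 0 with hi | hi
  · rw [if_neg hi.ne]
    refine (tsum_congr fun k => ?_).trans tsum_zero
    rw [qPochInf_zpow_of_nonpos hq0.ne' (by omega), mul_zero]
  lift i to ℕ using hi with p
  have hvan : ∀ k ∉ range (p + 1),
      eulerCoeff q k / qPochInf q q * qPochInf (q ^ ((p : ℤ) - k + 1)) q = 0 := by
    intro k hk
    rw [mem_range, not_lt] at hk
    rw [qPochInf_zpow_of_nonpos hq0.ne' (by omega), mul_zero]
  have hq : ∀ n, q ^ (n + 1) ≠ 1 := fun n => (pow_lt_one₀ hq0.le hq1 n.succ_ne_zero).ne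
  simp only [Nat.cast_eq_zero]
  rw [tsum_eq_sum hvan, ← sum_range_eulerCoeff_mul_inv_qPoch hq p]
  refine sum_congr rfl fun k hk => ?_
  have hpk : (p : ℤ) - k + 1 = ((p - k : ℕ) : ℤ) + 1 := by
    rw [mem_range] at hk
    omega
  rw [hpk, qPochInf_zpow_natCast_add_one hq0 hq1]
  field_simp [(qPochInf_pos hq1 hq0.le hq1).ne']

end qPochInf

theorem eq_zero_of_tsum_mul_shift_eq_zero {h c : ℕ → ℝ} {B : ℤ → ℝ} {s : ℕ → ℕ} {C : ℝ}
    (hs : s.Injective) (hh : Summable fun k => |h k|) (hc : Summable fun m => |c m|)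
    (hB : ∀ i, |B i| ≤ C) (hinv : ∀ i : ℤ, ∑' k : ℕ, h k * B (i - k) = if i = 0 then 1 else 0)
    (hvan : ∀ n : ℕ, ∑' m : ℕ, c m * B (s m - n) = 0) : c = 0 := by
  funext m₀
  set F : ℕ → ℕ → ℝ := fun k m => h k * (c m * B (s m - (s m₀ + k : ℕ)))
  have hF : Summable (Function.uncurry F) := by
    refine ((hh.mul_of_nonneg hc (fun _ => abs_nonneg _) (fun _ => abs_nonneg _)).mul_right C
      ).of_norm_bounded fun km => ?_
    simp only [Function.uncurry, F, Real.norm_eq_abs, abs_mul, mul_assoc]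
    gcongr
    exact hB _
  have h_row : ∑' k, ∑' m, F k m = 0 := by
    simp only [F, tsum_mul_left, hvan, mul_zero, tsum_zero]
  have h_col : ∑' m, ∑' k, F k m = c m₀ := by
    have hcol (m : ℕ) : ∑' k, F k m = c m * if s m = s m₀ then 1 else 0 := by
      have hidx (k : ℕ) : ((s m : ℕ) : ℤ) - (s m₀ + k : ℕ) = ((s m : ℤ) - s m₀) - k := by
        push_cast; ring
      simp only [F, hidx, mul_left_comm (h _), tsum_mul_left, hinv, sub_eq_zero, Nat.cast_inj]
    rw [tsum_congr hcol, tsum_eq_single m₀ fun m hm => by rw [if_neg (hs.ne hm), mul_zero],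
      if_pos rfl, mul_one]
  rw [← h_col, hF.tsum_comm, h_row, Pi.zero_apply]

theorem stmt7_general (q : ℝ) (hq0 : 0 < q) (hq1 : q < 1) (y : ℝ → ℝ)
    (hy : Summable (fun m : ℕ => |y (q ^ m)| * q ^ m))
    (hvanish : ∀ n : ℕ,
      qIntegral01 q (fun x => y x * qPochInf (q ^ (1 - n : ℤ) * x ^ 2) q) = 0) :
    ∀ m : ℕ, y (q ^ m) = 0 := by
  have hexp (m n : ℕ) : q ^ (1 - n : ℤ) * (q ^ m) ^ 2 = q ^ (((2 * m : ℕ) : ℤ) - n + 1) := by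
    rw [← pow_mul, ← zpow_natCast, ← zpow_add₀ hq0.ne']
    congr 1
    push_cast
    ring
  have hh : Summable fun k => |eulerCoeff q k / qPochInf q q| := by
    simpa only [abs_div] using (summable_abs_eulerCoeff hq0 hq1).div_const _
  have hc : Summable fun m => |y (q ^ m) * q ^ m| := by
    simpa only [abs_mul, abs_of_pos (pow_pos hq0 _)] using hy
  have hvan (n : ℕ) :
      ∑' m, y (q ^ m) * q ^ m * qPochInf (q ^ (((2 * m : ℕ) : ℤ) - n + 1)) q = 0 := by
    have h := hvanish n
    rw [qIntegral01, mul_eq_zero, or_iff_right (sub_ne_zero.mpr hq1.ne')] at h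
    rw [← h]
    exact tsum_congr fun m => by rw [hexp, mul_right_comm]
  have h0 := eq_zero_of_tsum_mul_shift_eq_zero (s := (2 * ·))
    (B := fun i => qPochInf (q ^ (i + 1)) q) (fun a b hab => by simpa using hab) hh hc
    (fun i => abs_qPochInf_zpow_le_one hq0 hq1 (i + 1))
    (tsum_eulerCoeff_mul_qPochInf_zpow hq0 hq1) hvan
  intro m
  exact (mul_eq_zero.mp (congrFun h0 m)).resolve_right (pow_pos hq0 m).ne'

/-- The sequence `x ↦ (q^{1-n} x²; q)_∞`, `n = 0,1,2,...` is complete in `L¹` with respect to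
the Jackson q-measure on `(0,1)`. -/
theorem stmt7 (q : ℝ) (hq0 : 0 < q) (hq1 : q < 1) (y : ℝ → ℝ)
    (hy : Summable (fun m : ℕ => |y (q ^ m)| * q ^ m))
    (hsum : ∀ n : ℕ,
      Summable (fun m : ℕ => y (q ^ m) * qPochInf (q ^ (1 - n : ℤ) * (q ^ m) ^ 2) q * q ^ m))
    (hvanish : ∀ n : ℕ,
      qIntegral01 q (fun x => y x * qPochInf (q ^ (1 - n : ℤ) * x ^ 2) q) = 0) :
    ∀ m : ℕ, y (q ^ m) = 0 :=
  stmt7_general q hq0 hq1 y hy hvanish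
end

section
/- For 0 < α < ν, the n-th positive zero of the Bessel function J_α is strictly less than the n-th positive zero of J_ν: j_{n,α} < j_{n,ν} for all n ≥ 1. -/
/-!
Sturm comparison. For `x > 0`, `J_μ(x) = (x/2)^μ f_μ(x²/4)` where `f_μ` is an entire power series
with `t f_μ'' + (μ + 1) f_μ' + f_μ = 0`, so `J_μ` solves Bessel's equation. Hence
`W = x (J_ν' J_α - J_ν J_α')` satisfies `W' = (ν² - α²) J_ν J_α / x`. Let `A < B` be consecutive
zeros of `J_ν` in `[0, ∞)`. If `J_α` had no zero in `(A, B)`, then `J_ν J_α` would have a constant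
sign `s` there, so `s W` would be strictly increasing on `(A, B]`. But
`s W(B) = B s (J_ν J_α)'(B) ≤ 0`, while `s W(A⁺) ≥ 0`: for `A > 0` it equals `A s (J_ν J_α)'(A)`,
and for `A = 0` it vanishes since `W = O(x^(ν+α))`. So `J_α` has a zero below `j_{1,ν}` and one in
each gap `(j_{k,ν}, j_{k+1,ν})`, and as the `j_{n,α}` enumerate the positive zeros of `J_α`,
`j_{n,α} < j_{n,ν}`.
-/

/-- The classical Bessel function of the first kind of order `ν`. -/
noncomputable def besselJ (ν x : ℝ) : ℝ :=
  ∑' n : ℕ, (-1 : ℝ) ^ n / (n.factorial * Real.Gamma (ν + n + 1)) * (x / 2) ^ (ν + 2 * (n : ℝ))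

open Real Filter Topology Set
open scoped Nat

section Order

theorem lt_of_interlace {β : Type*} [Preorder β] {a b : ℕ → β} (ha : StrictMono a) {Z : Set β}
    (hZ : Z ⊆ range a) (h0 : ∃ z ∈ Z, z < b 0)
    (hstep : ∀ k, ∃ z ∈ Z, b k < z ∧ z < b (k + 1)) (n : ℕ) : a n < b n := by
  choose z₀ hz₀Z hz₀ using h0
  choose z hzZ hz_gt hz_lt using hstep
  let w : ℕ → β := fun n => n.casesOn z₀ z
  have hw_lt : ∀ n, w n < b n := fun n => n.casesOn hz₀ hz_lt
  have hwZ : ∀ n, w n ∈ Z := fun n => n.casesOn hz₀Z hzZ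
  have hw_mono : StrictMono w := strictMono_nat_of_lt_succ fun n => (hw_lt n).trans (hz_gt n)
  choose m hm using fun n => hZ (hwZ n)
  have hm_mono : StrictMono m := fun i j hij => ha.lt_iff_lt.mp <| by
    simpa only [hm] using hw_mono hij
  calc a n ≤ a (m n) := ha.monotone hm_mono.le_apply
    _ = w n := hm n
    _ < b n := hw_lt n

theorem StrictMonoOn.lt_of_tendsto_nhdsGT {α β : Type*} [LinearOrder α] [TopologicalSpace α]
    [OrderTopology α] [DenselyOrdered α] [LinearOrder β] [TopologicalSpace β]
    [OrderClosedTopology β] {f : α → β} {a b : α} {L : β} (hf : StrictMonoOn f (Ioc a b))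
    (hab : a < b) (hL : Tendsto f (𝓝[>] a) (𝓝 L)) : L < f b := by
  have : (𝓝[>] a).NeBot := nhdsGT_neBot_of_exists_gt ⟨b, hab⟩
  obtain ⟨x, hax, hxb⟩ := exists_between hab
  have hx : x ∈ Ioc a b := ⟨hax, hxb.le⟩
  refine lt_of_le_of_lt (le_of_tendsto hL ?_) (hf hx (right_mem_Ioc.2 hab) hxb)
  filter_upwards [Ioo_mem_nhdsGT hax] with y hy
  exact (hf ⟨hy.1, hy.2.le.trans hxb.le⟩ hx hy.2).le

end Order

section Calculus

theorem IsPreconnected.mul_pos_of_ne_zero {s : Set ℝ} (hs : IsPreconnected s) {g : ℝ → ℝ}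
    (hg : ContinuousOn g s) (hne : ∀ x ∈ s, g x ≠ 0) {a b : ℝ} (ha : a ∈ s) (hb : b ∈ s) :
    0 < g a * g b := by
  by_contra! h
  obtain ⟨c, hc, hc0⟩ : (0 : ℝ) ∈ g '' s := by
    rcases mul_nonpos_iff.1 h with ⟨hga, hgb⟩ | ⟨hga, hgb⟩
    · exact hs.intermediate_value hb ha hg ⟨hgb, hga⟩
    · exact hs.intermediate_value ha hb hg ⟨hga, hgb⟩
  exact hne c hc hc0

variable {g : ℝ → ℝ} {g' a b : ℝ}

theorem HasDerivAt.nonneg_of_zero_of_pos_Ioo (hd : HasDerivAt g g' a) (h0 : g a = 0)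
    (hab : a < b) (hpos : ∀ x ∈ Ioo a b, 0 < g x) : 0 ≤ g' := by
  refine ge_of_tendsto (hd.tendsto_slope.mono_left (nhdsGT_le_nhdsNE a)) ?_
  filter_upwards [Ioo_mem_nhdsGT hab] with x hx
  rw [slope_def_field, h0, sub_zero]
  exact div_nonneg (hpos x hx).le (sub_nonneg.2 hx.1.le)

theorem HasDerivAt.nonpos_of_zero_of_pos_Ioo (hd : HasDerivAt g g' b) (h0 : g b = 0)
    (hab : a < b) (hpos : ∀ x ∈ Ioo a b, 0 < g x) : g' ≤ 0 := by
  refine le_of_tendsto (hd.tendsto_slope.mono_left (nhdsLT_le_nhdsNE b)) ?_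
  filter_upwards [Ioo_mem_nhdsLT hab] with x hx
  rw [slope_def_field, h0, sub_zero]
  exact div_nonpos_of_nonneg_of_nonpos (hpos x hx).le (sub_nonpos.2 hx.2.le)

end Calculus

namespace Bessel

section PowerSeries

noncomputable def powerSeriesSum (c : ℕ → ℝ) (t : ℝ) : ℝ := ∑' n, c n * t ^ n

def derivCoeff (c : ℕ → ℝ) (n : ℕ) : ℝ := (n + 1) * c (n + 1)

def HasInfiniteRadius (c : ℕ → ℝ) : Prop :=
  ∀ r : ℝ, 0 < r → Summable fun n => |c n| * r ^ n

variable {c : ℕ → ℝ}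

theorem HasInfiniteRadius.summable (hc : HasInfiniteRadius c) (t : ℝ) :
    Summable fun n => c n * t ^ n := by
  refine .of_norm <| (hc (|t| + 1) (by positivity)).of_nonneg_of_le (fun n => norm_nonneg _)
    fun n => ?_
  rw [Real.norm_eq_abs, abs_mul, abs_pow]
  gcongr
  linarith

theorem HasInfiniteRadius.derivCoeff (hc : HasInfiniteRadius c) :
    HasInfiniteRadius (derivCoeff c) := by
  intro r hr
  refine (((hc (2 * r) (by positivity)).comp_injective (add_left_injective 1)).mul_left r⁻¹)
    |>.of_nonneg_of_le (fun n => by positivity) fun n => ?_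
  have h2 : (n : ℝ) + 1 ≤ 2 ^ (n + 1) := by exact_mod_cast (Nat.lt_two_pow_self (n := n + 1)).le
  calc |Bessel.derivCoeff c n| * r ^ n = ((n : ℝ) + 1) * |c (n + 1)| * r ^ n := by
        rw [Bessel.derivCoeff, abs_mul, abs_of_nonneg (by positivity)]
    _ ≤ 2 ^ (n + 1) * |c (n + 1)| * r ^ n := by gcongr
    _ = r⁻¹ * (|c (n + 1)| * (2 * r) ^ (n + 1)) := by field_simp; ring

theorem HasInfiniteRadius.hasDerivAt (hc : HasInfiniteRadius c) (t : ℝ) :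
    HasDerivAt (powerSeriesSum c) (powerSeriesSum (Bessel.derivCoeff c) t) t := by
  set R := |t| + 1
  have htR : t ∈ Ioo (-R) R := abs_lt.1 (lt_add_one _)
  have hbound : ∀ n, ∀ y ∈ Ioo (-R) R, ‖c n * (n * y ^ (n - 1))‖ ≤ n * |c n| * R ^ (n - 1) := by
    intro n y hy
    rw [Real.norm_eq_abs, abs_mul, abs_mul, abs_pow, Nat.abs_cast, mul_left_comm, ← mul_assoc]
    gcongr
    exact (abs_lt.2 hy).le
  have hu : Summable fun n => n * |c n| * R ^ (n - 1) := by
    refine (summable_nat_add_iff 1).1 <| (hc.derivCoeff R (by positivity)).congr fun n => ?_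
    rw [Bessel.derivCoeff, abs_mul, abs_of_nonneg (by positivity)]
    push_cast
    rfl
  have hderiv : HasDerivAt (powerSeriesSum c) (∑' n, c n * (n * t ^ (n - 1))) t :=
    hasDerivAt_tsum_of_isPreconnected hu isOpen_Ioo isPreconnected_Ioo
      (fun n y _ => (hasDerivAt_pow n y).const_mul (c n)) hbound htR (hc.summable t) htR
  refine hderiv.congr_deriv ?_
  rw [Summable.tsum_eq_zero_add (.of_norm_bounded hu fun n => hbound n t htR)]
  simp only [CharP.cast_eq_zero, zero_mul, mul_zero, zero_add, powerSeriesSum,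
    Bessel.derivCoeff, Nat.cast_add, Nat.cast_one, Nat.add_sub_cancel]
  exact tsum_congr fun n => by ring

theorem HasInfiniteRadius.continuous (hc : HasInfiniteRadius c) : Continuous (powerSeriesSum c) :=
  continuous_iff_continuousAt.2 fun t => (hc.hasDerivAt t).continuousAt

theorem HasInfiniteRadius.hasSum_natCast_mul (hc : HasInfiniteRadius c) (t : ℝ) :
    HasSum (fun n : ℕ => (n : ℝ) * c n * t ^ n) (t * powerSeriesSum (Bessel.derivCoeff c) t) := by
  have hshift : HasSum (fun n => ((n + 1 : ℕ) : ℝ) * c (n + 1) * t ^ (n + 1))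
      (t * powerSeriesSum (Bessel.derivCoeff c) t) := by
    refine ((hc.derivCoeff.summable t).hasSum.mul_left t).congr_fun fun n => ?_
    rw [Bessel.derivCoeff]
    push_cast
    ring
  exact (hasSum_nat_add_iff' 1).1 (by simpa using hshift)

end PowerSeries

section Coefficients

noncomputable def besselCoeff (ν : ℝ) (n : ℕ) : ℝ := (-1) ^ n / (n ! * Gamma (ν + n + 1))

variable {ν : ℝ}

theorem besselCoeff_succ (hν : -1 < ν) (n : ℕ) :
    ((n : ℝ) + 1) * (ν + n + 1) * besselCoeff ν (n + 1) = -besselCoeff ν n := by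
  have hpos : 0 < ν + n + 1 := by linarith [n.cast_nonneg (α := ℝ)]
  have hΓ : Gamma (ν + (n + 1 : ℕ) + 1) = (ν + n + 1) * Gamma (ν + n + 1) := by
    rw [Nat.cast_succ, ← add_assoc, Gamma_add_one hpos.ne']
  have := (Gamma_pos_of_pos hpos).ne'
  rw [besselCoeff, besselCoeff, hΓ, Nat.factorial_succ, pow_succ]
  push_cast
  field_simp

theorem abs_besselCoeff_le (hν : 0 ≤ ν) (n : ℕ) :
    |besselCoeff ν n| ≤ |besselCoeff ν 0| / n ! := by
  induction n with
  | zero => simp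
  | succ n ih =>
    have hrec : ((n : ℝ) + 1) * |besselCoeff ν (n + 1)| ≤ |besselCoeff ν n| := calc
      ((n : ℝ) + 1) * |besselCoeff ν (n + 1)|
          ≤ ((n : ℝ) + 1) * (ν + n + 1) * |besselCoeff ν (n + 1)| := by
        gcongr
        nlinarith [n.cast_nonneg (α := ℝ)]
      _ = |besselCoeff ν n| := by
        rw [← abs_neg (besselCoeff ν n), ← besselCoeff_succ (by linarith) n, abs_mul,
          abs_of_nonneg (a := ((n : ℝ) + 1) * (ν + n + 1)) (by positivity)]
    rw [le_div_iff₀ (by positivity)]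
    calc |besselCoeff ν (n + 1)| * ((n + 1) ! : ℕ)
        = ((n : ℝ) + 1) * |besselCoeff ν (n + 1)| * n ! := by
          push_cast [Nat.factorial_succ]; ring
      _ ≤ |besselCoeff ν n| * n ! := by gcongr
      _ ≤ |besselCoeff ν 0| := (le_div_iff₀ (by positivity)).1 ih

theorem hasInfiniteRadius_besselCoeff (hν : 0 ≤ ν) : HasInfiniteRadius (besselCoeff ν) := by
  intro r hr
  refine ((summable_pow_div_factorial r).mul_left |besselCoeff ν 0|).of_nonneg_of_le
    (fun n => by positivity) fun n => ?_
  calc |besselCoeff ν n| * r ^ n ≤ |besselCoeff ν 0| / n ! * r ^ n := by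
        gcongr; exact abs_besselCoeff_le hν n
    _ = |besselCoeff ν 0| * (r ^ n / n !) := by ring

theorem besselCoeff_ode (hν : 0 ≤ ν) (t : ℝ) :
    t * powerSeriesSum (derivCoeff (derivCoeff (besselCoeff ν))) t
      + (ν + 1) * powerSeriesSum (derivCoeff (besselCoeff ν)) t
      + powerSeriesSum (besselCoeff ν) t = 0 := by
  have ha := hasInfiniteRadius_besselCoeff hν
  have hda := ha.derivCoeff
  have hcoeff : ∀ n : ℕ, (n : ℝ) * derivCoeff (besselCoeff ν) n * t ^ n
      + (ν + 1) * (derivCoeff (besselCoeff ν) n * t ^ n) + besselCoeff ν n * t ^ n = 0 := by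
    intro n
    rw [derivCoeff]
    linear_combination t ^ n * besselCoeff_succ (by linarith) n
  have h := ((hda.hasSum_natCast_mul t).add ((hda.summable t).hasSum.mul_left (ν + 1))).add
    (ha.summable t).hasSum
  simp only [hcoeff] at h
  exact h.unique hasSum_zero

end Coefficients

section BesselFunction

variable {ν x : ℝ}

theorem besselJ_eq_of_pos (hx : 0 < x) :
    besselJ ν x = (x / 2) ^ ν * powerSeriesSum (besselCoeff ν) (x ^ 2 / 4) := by
  rw [besselJ, powerSeriesSum, ← tsum_mul_left]
  refine tsum_congr fun n => ?_
  rw [show ν + 2 * (n : ℝ) = ν + (2 * n : ℕ) by push_cast; ring,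
    rpow_add_natCast (by positivity), pow_mul, besselCoeff]
  ring

theorem besselJ_zero_right (hν : 0 < ν) : besselJ ν 0 = 0 := by
  rw [besselJ]
  refine (tsum_congr fun n => ?_).trans tsum_zero
  rw [zero_div, zero_rpow (by positivity : (0 : ℝ) < ν + 2 * n).ne', mul_zero]

theorem hasDerivAt_half_rpow_mul_comp {g : ℝ → ℝ} {g' : ℝ} (ν : ℝ) (hx : 0 < x)
    (hg : HasDerivAt g g' (x ^ 2 / 4)) :
    HasDerivAt (fun y => (y / 2) ^ ν * g (y ^ 2 / 4))
      ((x / 2) ^ ν * (ν / x * g (x ^ 2 / 4) + x / 2 * g')) x := by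
  have hhalf : HasDerivAt (fun y : ℝ => y / 2) (1 / 2) x := (hasDerivAt_id x).div_const 2
  have hsq : HasDerivAt (fun y : ℝ => y ^ 2 / 4) (x / 2) x :=
    ((hasDerivAt_pow 2 x).div_const 4).congr_deriv (by ring)
  refine ((hhalf.rpow_const (Or.inl (by positivity))).mul (hg.comp x hsq)).congr_deriv ?_
  rw [rpow_sub_one (by positivity), Function.comp_apply]
  field_simp

/-- The derivative of `besselJ ν` on `x > 0`. -/
noncomputable def besselJDeriv (ν x : ℝ) : ℝ :=
  ν / x * besselJ ν x
    + x / 2 * ((x / 2) ^ ν * powerSeriesSum (derivCoeff (besselCoeff ν)) (x ^ 2 / 4))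

theorem hasDerivAt_besselJ (hν : 0 ≤ ν) (hx : 0 < x) :
    HasDerivAt (besselJ ν) (besselJDeriv ν x) x := by
  have hJ := hasDerivAt_half_rpow_mul_comp ν hx
    ((hasInfiniteRadius_besselCoeff hν).hasDerivAt (x ^ 2 / 4))
  refine (hJ.congr_of_eventuallyEq ?_).congr_deriv ?_
  · filter_upwards [lt_mem_nhds hx] with y hy using besselJ_eq_of_pos hy
  · rw [besselJDeriv, besselJ_eq_of_pos hx]
    ring

theorem hasDerivAt_besselJDeriv (hν : 0 ≤ ν) (hx : 0 < x) :
    HasDerivAt (besselJDeriv ν)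
      ((ν ^ 2 / x ^ 2 - 1) * besselJ ν x - besselJDeriv ν x / x) x := by
  have hc := (hasInfiniteRadius_besselCoeff hν).derivCoeff
  have h := (((hasDerivAt_const x ν).fun_div (hasDerivAt_id x) hx.ne').mul
    (hasDerivAt_besselJ hν hx)).add
      (((hasDerivAt_id x).div_const 2).mul
        (hasDerivAt_half_rpow_mul_comp ν hx (hc.hasDerivAt (x ^ 2 / 4))))
  refine h.congr_deriv ?_
  rw [besselJDeriv, besselJ_eq_of_pos hx]
  simp only [id]
  field_simp
  linear_combination 4 * x ^ 2 * besselCoeff_ode hν (x ^ 2 / 4)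

end BesselFunction

section Wronskian

variable {α ν x : ℝ}

noncomputable def besselWronskian (α ν x : ℝ) : ℝ :=
  x * (besselJDeriv ν x * besselJ α x - besselJ ν x * besselJDeriv α x)

theorem hasDerivAt_besselWronskian (hα : 0 ≤ α) (hν : 0 ≤ ν) (hx : 0 < x) :
    HasDerivAt (besselWronskian α ν) ((ν ^ 2 - α ^ 2) / x * (besselJ ν x * besselJ α x)) x := by
  have h := (hasDerivAt_id x).mul
    (((hasDerivAt_besselJDeriv hν hx).mul (hasDerivAt_besselJ hα hx)).sub
      ((hasDerivAt_besselJ hν hx).mul (hasDerivAt_besselJDeriv hα hx)))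
  refine h.congr_deriv ?_
  simp only [id, Pi.mul_apply, Pi.sub_apply]
  field_simp
  ring

theorem besselWronskian_of_besselJ_eq_zero (hx : besselJ ν x = 0) :
    besselWronskian α ν x
      = x * (besselJDeriv ν x * besselJ α x + besselJ ν x * besselJDeriv α x) := by
  simp [besselWronskian, hx]

theorem tendsto_besselWronskian_nhdsGT_zero (hα : 0 ≤ α) (hν : 0 ≤ ν) (hαν : 0 < ν + α) :
    Tendsto (besselWronskian α ν) (𝓝[>] 0) (𝓝 0) := by
  have := (hasInfiniteRadius_besselCoeff hα).continuous
  have := (hasInfiniteRadius_besselCoeff hν).continuous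
  have := (hasInfiniteRadius_besselCoeff hα).derivCoeff.continuous
  have := (hasInfiniteRadius_besselCoeff hν).derivCoeff.continuous
  have hseries : Continuous fun x : ℝ =>
      (ν - α) * (powerSeriesSum (besselCoeff ν) (x ^ 2 / 4)
          * powerSeriesSum (besselCoeff α) (x ^ 2 / 4))
        + x ^ 2 / 2 * (powerSeriesSum (derivCoeff (besselCoeff ν)) (x ^ 2 / 4)
            * powerSeriesSum (besselCoeff α) (x ^ 2 / 4)
          - powerSeriesSum (besselCoeff ν) (x ^ 2 / 4)
            * powerSeriesSum (derivCoeff (besselCoeff α)) (x ^ 2 / 4)) := by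
    fun_prop
  have hpow : Tendsto (fun x : ℝ => (x / 2) ^ (ν + α)) (𝓝[>] 0) (𝓝 0) := by
    have h := ((continuous_id.div_const 2).rpow_const fun _ => Or.inr hαν.le).tendsto 0
    rw [id, zero_div, zero_rpow hαν.ne'] at h
    exact h.mono_left nhdsWithin_le_nhds
  have h := hpow.mul ((hseries.tendsto 0).mono_left nhdsWithin_le_nhds)
  rw [zero_mul] at h
  refine h.congr' ?_
  filter_upwards [self_mem_nhdsWithin] with x (hx : 0 < x)
  rw [besselWronskian, besselJDeriv, besselJDeriv, besselJ_eq_of_pos hx, besselJ_eq_of_pos hx,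
    rpow_add (by positivity)]
  field_simp
  ring

theorem strictMonoOn_mul_besselWronskian (hα : 0 ≤ α) (hαν : α < ν) {A B c : ℝ} (hA : 0 ≤ A)
    (hc : ∀ x ∈ Ioo A B, 0 < c * (besselJ ν x * besselJ α x)) :
    StrictMonoOn (fun x => c * besselWronskian α ν x) (Ioc A B) := by
  have hW : ∀ x, 0 < x → HasDerivAt (fun x => c * besselWronskian α ν x)
      (c * ((ν ^ 2 - α ^ 2) / x * (besselJ ν x * besselJ α x))) x := fun x hx =>
    (hasDerivAt_besselWronskian hα (hα.trans hαν.le) hx).const_mul c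
  refine strictMonoOn_of_deriv_pos (convex_Ioc A B)
    (fun x hx => (hW x (hA.trans_lt hx.1)).continuousAt.continuousWithinAt) fun x hx => ?_
  rw [interior_Ioc] at hx
  have hx0 := hA.trans_lt hx.1
  have hνα : 0 < ν ^ 2 - α ^ 2 := by nlinarith
  rw [(hW x hx0).deriv]
  calc 0 < (ν ^ 2 - α ^ 2) / x * (c * (besselJ ν x * besselJ α x)) :=
        mul_pos (div_pos hνα hx0) (hc x hx)
    _ = _ := by ring

end Wronskian

theorem exists_besselJ_zero_mem_Ioo {α ν A B : ℝ} (hα : 0 ≤ α) (hαν : α < ν) (hA : 0 ≤ A)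
    (hAB : A < B) (hνA : besselJ ν A = 0) (hνB : besselJ ν B = 0)
    (hν_ne : ∀ x ∈ Ioo A B, besselJ ν x ≠ 0) : ∃ z ∈ Ioo A B, besselJ α z = 0 := by
  have hν : 0 ≤ ν := hα.trans hαν.le
  by_contra! hα_ne
  set P : ℝ → ℝ := fun x => besselJ ν x * besselJ α x
  have hP : ∀ x, 0 < x → HasDerivAt P
      (besselJDeriv ν x * besselJ α x + besselJ ν x * besselJDeriv α x) x := fun x hx =>
    (hasDerivAt_besselJ hν hx).mul (hasDerivAt_besselJ hα hx)
  set c := P ((A + B) / 2)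
  have hcP : ∀ x ∈ Ioo A B, 0 < c * P x := fun x hx =>
    isPreconnected_Ioo.mul_pos_of_ne_zero
      (fun y hy => (hP y (hA.trans_lt hy.1)).continuousAt.continuousWithinAt)
      (fun y hy => mul_ne_zero (hν_ne y hy) (hα_ne y hy)) ⟨by linarith, by linarith⟩ hx
  set V : ℝ → ℝ := fun x => c * besselWronskian α ν x
  have hVB : V B ≤ 0 := by
    have hB := hA.trans_lt hAB
    have := ((hP B hB).const_mul c).nonpos_of_zero_of_pos_Ioo (by simp [P, hνB]) hAB hcP
    simp only [V, besselWronskian_of_besselJ_eq_zero hνB]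
    rw [mul_left_comm]
    exact mul_nonpos_of_nonneg_of_nonpos hB.le this
  obtain ⟨L, hL, hL0⟩ : ∃ L, Tendsto V (𝓝[>] A) (𝓝 L) ∧ 0 ≤ L := by
    rcases hA.eq_or_lt with rfl | hA
    · refine ⟨0, ?_, le_rfl⟩
      simpa using (tendsto_besselWronskian_nhdsGT_zero hα hν (by linarith)).const_mul c
    · refine ⟨V A, (((hasDerivAt_besselWronskian hα hν hA).const_mul c).continuousAt.tendsto
        |>.mono_left nhdsWithin_le_nhds), ?_⟩
      have := ((hP A hA).const_mul c).nonneg_of_zero_of_pos_Ioo (by simp [P, hνA]) hAB hcP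
      simp only [V, besselWronskian_of_besselJ_eq_zero hνA]
      rw [mul_left_comm]
      exact mul_nonneg hA.le this
  have := (strictMonoOn_mul_besselWronskian hα hαν hA hcP).lt_of_tendsto_nhdsGT hAB hL
  linarith

end Bessel

theorem stmt13_general (α ν : ℝ) (hα : 0 < α) (hαν : α < ν)
    (jα jν : ℕ → ℝ)
    (hjα_mono : StrictMono jα)
    (hjα_all : ∀ x : ℝ, 0 < x → besselJ α x = 0 → ∃ n, jα n = x)
    (hjν_mono : StrictMono jν) (hjν_pos : ∀ n, 0 < jν n)
    (hjν_zero : ∀ n, besselJ ν (jν n) = 0)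
    (hjν_all : ∀ x : ℝ, 0 < x → besselJ ν x = 0 → ∃ n, jν n = x) :
    ∀ n : ℕ, jα n < jν n := by
  have exists_zero_between {A : ℝ} {n : ℕ} (hA : 0 ≤ A) (hAn : A < jν n) (hνA : besselJ ν A = 0)
      (hgap : ∀ x ∈ Ioo A (jν n), x ∉ range jν) :
      ∃ z ∈ {x | 0 < x ∧ besselJ α x = 0}, A < z ∧ z < jν n := by
    obtain ⟨z, hz, hαz⟩ := Bessel.exists_besselJ_zero_mem_Ioo hα.le hαν hA hAn hνA (hjν_zero n)
      fun x hx h0 => hgap x hx (hjν_all x (hA.trans_lt hx.1) h0)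
    exact ⟨z, ⟨hA.trans_lt hz.1, hαz⟩, hz⟩
  refine lt_of_interlace (Z := {x | 0 < x ∧ besselJ α x = 0}) hjα_mono
    (fun x hx => hjα_all x hx.1 hx.2) ?_ fun k => ?_
  · obtain ⟨z, hz, -, hz0⟩ := exists_zero_between le_rfl (hjν_pos 0)
      (Bessel.besselJ_zero_right (hα.trans hαν))
      fun x hx ⟨m, hm⟩ => (hjν_mono.monotone m.zero_le).not_gt (hm ▸ hx.2)
    exact ⟨z, hz, hz0⟩
  · exact exists_zero_between (hjν_pos k).le (hjν_mono k.lt_succ_self) (hjν_zero k)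
      fun x hx ⟨m, hm⟩ => by
        have := hjν_mono.lt_iff_lt.1 (hm ▸ hx.1)
        have := hjν_mono.lt_iff_lt.1 (hm ▸ hx.2)
        omega

/-- For `0 < α < ν`, the n-th positive zero of `J_α` is strictly smaller than the n-th
positive zero of `J_ν`. -/
theorem stmt13 (α ν : ℝ) (hα : 0 < α) (hαν : α < ν)
    (jα jν : ℕ → ℝ)
    (hjα_mono : StrictMono jα) (hjα_pos : ∀ n, 0 < jα n)
    (hjα_zero : ∀ n, besselJ α (jα n) = 0)
    (hjα_all : ∀ x : ℝ, 0 < x → besselJ α x = 0 → ∃ n, jα n = x)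
    (hjν_mono : StrictMono jν) (hjν_pos : ∀ n, 0 < jν n)
    (hjν_zero : ∀ n, besselJ ν (jν n) = 0)
    (hjν_all : ∀ x : ℝ, 0 < x → besselJ ν x = 0 → ∃ n, jν n = x) :
    ∀ n : ℕ, jα n < jν n :=
  stmt13_general α ν hα hαν jα jν hjα_mono hjα_all hjν_mono hjν_pos hjν_zero hjν_all
end
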